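/- For all nonnegative integers n, the HR polynomials satisfy the three-term recurrence P_{n+1}(z) + d_n P_n(z) = z (P_n(z) + b_n P_{n−1}(z)), where d_n = −(n+β)/(n+α+1) and b_n = −n(n+α+β)/((n+α)(n+α+1)) (with the convention P_{−1} = 0). -/

import Mathlib

/-
Cancelling `(β)ₙ` against `(1 - β - n)ₖ` rewrites `Pₙ(z)` as `n! / (α + 1)ₙ` times the coefficient of
`tⁿ` in `G(t) = (1 - z t)^(-(α + 1)) (1 - t)^(-β)`. Each binomial factor satisfies a first order
linear ODE, so `G` satisfies `(1 - t)(1 - z t) G' = ((α + 1) z (1 - t) + β (1 - z t)) G`, and comparing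
the coefficients of `tⁿ` on both sides is the three-term recurrence.
-/

open Finset

noncomputable def poch (a : ℝ) (k : ℕ) : ℝ := ∏ i ∈ Finset.range k, (a + i)

noncomputable def HR (n : ℕ) (α β : ℝ) (z : ℝ) : ℝ :=
  (poch β n / poch (α + 1) n) *
    ∑ k ∈ Finset.range (n + 1),
      (poch (-(n : ℝ)) k * poch (α + 1) k) / ((k.factorial : ℝ) * poch (1 - β - (n : ℝ)) k) * z ^ k

open PowerSeries Nat

theorem poch_succ (a : ℝ) (k : ℕ) : poch a (k + 1) = poch a k * (a + k) :=
  prod_range_succ _ _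

theorem poch_succ' (a : ℝ) (k : ℕ) : poch a (k + 1) = a * poch (a + 1) k := by
  simp only [poch, prod_range_succ', Nat.cast_succ, Nat.cast_zero, add_zero]
  rw [mul_comm]
  congr 1
  exact prod_congr rfl fun i _ => by ring

theorem poch_add (a : ℝ) (m k : ℕ) : poch a (m + k) = poch a m * poch (a + m) k := by
  simp only [poch, prod_range_add, Nat.cast_add, add_assoc]

theorem poch_one (n : ℕ) : poch 1 n = n ! := by
  induction n with
  | zero => simp [poch]
  | succ n ih => rw [poch_succ, ih, factorial_succ]; push_cast; ring

theorem poch_one_sub_sub (c : ℝ) (k : ℕ) : poch (1 - c - k) k = (-1) ^ k * poch c k := by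
  induction k with
  | zero => simp [poch]
  | succ k ih =>
    rw [poch_succ', poch_succ, show 1 - c - ↑(k + 1) + 1 = 1 - c - k by push_cast; ring, ih]
    push_cast; ring

theorem poch_ne_zero {a : ℝ} {k : ℕ} (h : ∀ j < k, a + j ≠ 0) : poch a k ≠ 0 :=
  prod_ne_zero_iff.2 fun j hj => h j (mem_range.1 hj)

theorem poch_mul_poch_neg_div (β : ℝ) {n k : ℕ} (hk : k ≤ n) (hβ : poch β n ≠ 0) :
    poch β n * poch (-n) k / poch (1 - β - n) k = n ! * poch β (n - k) / (n - k)! := by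
  obtain ⟨j, rfl⟩ := Nat.exists_eq_add_of_le' hk
  rw [Nat.add_sub_cancel]
  have hnk : poch (1 - (β + j) - k) k = poch (1 - β - ↑(j + k)) k := by push_cast; ring_nf
  have hneg : poch (1 - (j + 1) - k) k = poch (-↑(j + k)) k := by push_cast; ring_nf
  rw [poch_add] at hβ
  rw [poch_add, ← hnk, ← hneg, poch_one_sub_sub, poch_one_sub_sub, ← poch_one, poch_add,
    poch_one, add_comm (1 : ℝ)]
  have := right_ne_zero_of_mul hβ
  field_simp

-- The binomial series `∑ (c)ₖ (q t)ᵏ / k! = (1 - q t)^(-c)`.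
noncomputable def pochSeries (c q : ℝ) : ℝ⟦X⟧ := mk fun k => poch c k / k ! * q ^ k

theorem HR_eq_coeff (n : ℕ) (α β z : ℝ) (hβ : poch β n ≠ 0) :
    HR n α β z = n ! / poch (α + 1) n * coeff n (pochSeries (α + 1) z * pochSeries β 1) := by
  rw [coeff_mul, sum_antidiagonal_eq_sum_range_succ
    (fun k j => coeff k (pochSeries (α + 1) z) * coeff j (pochSeries β 1)), HR, mul_sum, mul_sum]
  refine sum_congr rfl fun k hk => ?_
  have hkn : k ≤ n := Nat.lt_succ_iff.1 (mem_range.1 hk)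
  simp only [pochSeries, coeff_mk, one_pow, mul_one]
  calc _ = poch β n * poch (-n) k / poch (1 - β - n) k * (poch (α + 1) k / k ! * z ^ k)
        / poch (α + 1) n := by ring
    _ = _ := by rw [poch_mul_poch_neg_div β hkn hβ]; ring

theorem Derivation.mul_mul_apply_mul_of_eq {R A : Type*} [CommSemiring R] [CommRing A] [Algebra R A]
    (D : Derivation R A A) {u v r s f g : A} (hf : u * D f = r * f) (hg : v * D g = s * g) :
    u * v * D (f * g) = (r * v + s * u) * (f * g) := by
  rw [D.leibniz, smul_eq_mul, smul_eq_mul]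
  linear_combination v * g * hf + u * f * hg

theorem coeff_X_mul_derivative {R : Type*} [CommSemiring R] (f : R⟦X⟧) (n : ℕ) :
    coeff n (X * d⁄dX R f) = n * coeff n f := by
  rcases n with _ | n
  · simp
  · rw [coeff_succ_X_mul, coeff_derivative, mul_comm, Nat.cast_succ]

theorem one_sub_mul_derivative_pochSeries (c q : ℝ) :
    (1 - C q * X) * d⁄dX ℝ (pochSeries c q) = C (q * c) * pochSeries c q := by
  ext n
  rw [sub_mul, one_mul, mul_assoc, map_sub, coeff_C_mul, coeff_C_mul, coeff_X_mul_derivative,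
    coeff_derivative]
  simp only [pochSeries, coeff_mk, poch_succ, factorial_succ]
  push_cast
  field_simp
  ring

theorem coeff_succ_succ_of_ode {R : Type*} [CommRing R] {H : R⟦X⟧} {p q r s : R}
    (hH : (1 - C p * X) * (1 - C q * X) * d⁄dX R H
      = (C r * (1 - C q * X) + C s * (1 - C p * X)) * H) (m : ℕ) :
    (m + 2) * coeff (m + 2) H - (p + q) * (m + 1) * coeff (m + 1) H + p * q * m * coeff m H
      = (r + s) * coeff (m + 1) H - (r * q + s * p) * coeff m H := by
  have hL : (1 - C p * X) * (1 - C q * X) * d⁄dX R H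
      = d⁄dX R H - C (p + q) * (X * d⁄dX R H) + C (p * q) * (X * (X * d⁄dX R H)) := by
    simp only [map_add, map_mul]; ring
  have hR : (C r * (1 - C q * X) + C s * (1 - C p * X)) * H
      = C (r + s) * H - C (r * q + s * p) * (X * H) := by
    simp only [map_add, map_mul]; ring
  have := congrArg (coeff (m + 1)) hH
  rw [hL, hR] at this
  simp only [map_add (coeff (m + 1)), map_sub (coeff (m + 1)), coeff_C_mul, coeff_succ_X_mul,
    coeff_X_mul_derivative, coeff_derivative] at this
  push_cast at this
  linear_combination this

theorem coeff_one_of_ode {R : Type*} [CommRing R] {H : R⟦X⟧} {p q r s : R}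
    (hH : (1 - C p * X) * (1 - C q * X) * d⁄dX R H
      = (C r * (1 - C q * X) + C s * (1 - C p * X)) * H) :
    coeff 1 H = (r + s) * coeff 0 H := by
  have hL : (1 - C p * X) * (1 - C q * X) * d⁄dX R H
      = d⁄dX R H - X * ((C p + C q - C (p * q) * X) * d⁄dX R H) := by
    simp only [map_mul]; ring
  have hR : (C r * (1 - C q * X) + C s * (1 - C p * X)) * H
      = C (r + s) * H - X * (C (r * q + s * p) * H) := by
    simp only [map_add, map_mul]; ring
  have := congrArg (coeff 0) hH
  rw [hL, hR, map_sub, map_sub, coeff_zero_X_mul, coeff_zero_X_mul, coeff_derivative,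
    coeff_C_mul] at this
  linear_combination this

theorem hr_three_term_recurrence_general (n : ℕ) (α β : ℝ)
    (hβ : ∀ j < n + 1, β + (j : ℝ) ≠ 0)
    (hα : ∀ j < n + 1, α + 1 + (j : ℝ) ≠ 0) :
    ∀ z : ℝ,
      HR (n + 1) α β z + (-((n : ℝ) + β) / ((n : ℝ) + α + 1)) * HR n α β z
        = z * (HR n α β z
            + (-((n : ℝ) * ((n : ℝ) + α + β)) / (((n : ℝ) + α) * ((n : ℝ) + α + 1)))
              * (if n = 0 then 0 else HR (n - 1) α β z)) := by
  intro z
  have hH := Derivation.mul_mul_apply_mul_of_eq _ (one_sub_mul_derivative_pochSeries (α + 1) z)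
    (one_sub_mul_derivative_pochSeries β 1)
  have hHR (k : ℕ) (hk : k ≤ n + 1) :
      HR k α β z = k ! / poch (α + 1) k * coeff k (pochSeries (α + 1) z * pochSeries β 1) :=
    HR_eq_coeff k α β z (poch_ne_zero fun j hj => hβ j (by omega))
  generalize pochSeries (α + 1) z * pochSeries β 1 = H at hH hHR
  rcases n with _ | m
  · have ha : α + 1 ≠ 0 := by simpa using hα 0 (by omega)
    rw [if_pos rfl, hHR 1 le_rfl, hHR 0 (by omega)]
    simp only [poch, prod_range_one, prod_range_zero, Nat.cast_zero, factorial_zero, factorial_one,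
      Nat.cast_one, add_zero, zero_add, zero_mul, neg_zero, zero_div, mul_zero]
    field_simp
    linear_combination coeff_one_of_ode hH
  · have hA : poch (α + 1) m ≠ 0 := poch_ne_zero fun j hj => hα j (by omega)
    have hm : α + 1 + m ≠ 0 := hα m (by omega)
    have hm1 : α + 1 + (m + 1 : ℕ) ≠ 0 := hα (m + 1) (by omega)
    push_cast at hm1
    have hm' : (m : ℝ) + 1 + α ≠ 0 := by contrapose! hm; linarith
    have hm1' : (m : ℝ) + 1 + α + 1 ≠ 0 := by contrapose! hm1; linarith
    rw [if_neg (by omega), hHR _ le_rfl, hHR _ (by omega), hHR _ (by omega), Nat.add_sub_cancel,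
      poch_succ, poch_succ, factorial_succ, factorial_succ]
    push_cast
    field_simp
    linear_combination (↑m + 1 + α) * (↑m + 1 + α + 1) * coeff_succ_succ_of_ode hH m

theorem hr_three_term_recurrence (n : ℕ) (α β : ℝ)
    (hα0 : (n : ℝ) + α ≠ 0) (hα1 : (n : ℝ) + α + 1 ≠ 0)
    (hβ : ∀ j < n + 1, β + (j : ℝ) ≠ 0)
    (hα : ∀ j < n + 1, α + 1 + (j : ℝ) ≠ 0)
    (hd : ∀ m ≤ n + 1, ∀ j < m, 1 - β - (m : ℝ) + (j : ℝ) ≠ 0) :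
    ∀ z : ℝ,
      HR (n + 1) α β z + (-((n : ℝ) + β) / ((n : ℝ) + α + 1)) * HR n α β z
        = z * (HR n α β z
            + (-((n : ℝ) * ((n : ℝ) + α + β)) / (((n : ℝ) + α) * ((n : ℝ) + α + 1)))
              * (if n = 0 then 0 else HR (n - 1) α β z)) :=
  hr_three_term_recurrence_general n α β hβ hα
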